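/- (Ternary descent certificate) Let F(x) = f(x) + Σ_v g_v(x_v) + Σ_{(u,v)∈E} w_{(u,v)}|x_u − x_v| on a finite weighted graph G = (V,E,w) with w ≥ 0, f differentiable, each g_v directionally differentiable, and let x ∈ dom F. If F admits a strict descent direction at x (some d ∈ ℝ^V with F'(x,d) < 0), then F admits a strict descent direction in {−1, 0, +1}^V. -/

import Mathlib

/-!
The directional derivative `F'(x, ·)` is positively homogeneous, and it is additive on pairs of
directions that are comonotone and have the same sign at every vertex: the terms coming from `f`
and from edges with `x u ≠ x v` are linear, an edge with `x u = x v` contributes `|d u - d v|`,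
and `g v'(x v, ·)` is linear on each half-line. Splitting `d = d ⊔ 0 + d ⊓ 0` one of the two
parts is a strict descent direction, say `d ≥ 0`. Peeling off the smallest positive value `m`
writes `d = m • 1_S + d'` with `S` the support of `d` and `d'` of smaller support, so
`F'(x, d) = m F'(x, 1_S) + F'(x, d')`, and by induction on the support some indicator direction
`1_S` (or `-1_S`) is a strict descent direction.
-/

open Filter Set Finset

def HasDirDeriv {Ω : Type*} [AddCommGroup Ω] [Module ℝ Ω]
    (h : Ω → EReal) (x d : Ω) (L : EReal) : Prop :=
  Tendsto (fun t : ℝ => ((t⁻¹ : ℝ) : EReal) * (h (x + t • d) - h x))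
    (nhdsWithin 0 (Set.Ioi 0)) (nhds L)

variable {V : Type*} [Fintype V] [DecidableEq V]

/-- The objective `F = f + Σ_v g_v + graph total variation`. -/
noncomputable def objF (E : Finset (V × V)) (w : V × V → ℝ)
    (f : (V → ℝ) → ℝ) (g : V → ℝ → EReal) (x : V → ℝ) : EReal :=
  ((f x : ℝ) : EReal) + ∑ v, g v (x v) +
    ((∑ e ∈ E, w e * |x e.1 - x e.2| : ℝ) : EReal)

/-- `δ⁺_v(x) = ∇_v f(x) + g_v'(x_v, +1) + Σ_{e ∋ v} w_e sign(x_v − x_u)`. -/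
noncomputable def deltaPlus (E : Finset (V × V)) (w : V × V → ℝ)
    (f : (V → ℝ) → ℝ) (gd : V → ℝ → ℝ → EReal) (x : V → ℝ) (v : V) : EReal :=
  ((fderiv ℝ f x (Pi.single v 1) : ℝ) : EReal) + gd v (x v) 1 +
    ((∑ e ∈ E.filter (fun e => e.1 = v ∨ e.2 = v),
        w e * Real.sign (x v - x (if e.1 = v then e.2 else e.1)) : ℝ) : EReal)

/-- `δ⁻_v(x) = ∇_v f(x) − g_v'(x_v, −1) + Σ_{e ∋ v} w_e sign(x_v − x_u)`. -/
noncomputable def deltaMinus (E : Finset (V × V)) (w : V × V → ℝ)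
    (f : (V → ℝ) → ℝ) (gd : V → ℝ → ℝ → EReal) (x : V → ℝ) (v : V) : EReal :=
  ((fderiv ℝ f x (Pi.single v 1) : ℝ) : EReal) - gd v (x v) (-1) +
    ((∑ e ∈ E.filter (fun e => e.1 = v ∨ e.2 = v),
        w e * Real.sign (x v - x (if e.1 = v then e.2 else e.1)) : ℝ) : EReal)

/-- The value of the directional derivative of `F` at `x` in direction `d`. -/
noncomputable def dirDerivVal (E : Finset (V × V)) (w : V × V → ℝ)
    (f : (V → ℝ) → ℝ) (gd : V → ℝ → ℝ → EReal) (x d : V → ℝ) : EReal :=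
  (∑ v ∈ univ.filter (fun v => 0 < d v),
      ((d v : ℝ) : EReal) * deltaPlus E w f gd x v) +
  (∑ v ∈ univ.filter (fun v => d v < 0),
      ((d v : ℝ) : EReal) * deltaMinus E w f gd x v) +
  ((∑ e ∈ E.filter (fun e => x e.1 = x e.2), w e * |d e.1 - d e.2| : ℝ) : EReal)

open Topology

theorem EReal.sum_ne_bot {ι : Type*} {s : Finset ι} {f : ι → EReal} (h : ∀ i ∈ s, f i ≠ ⊥) :
    ∑ i ∈ s, f i ≠ ⊥ :=
  Finset.sum_induction f (· ≠ ⊥) (fun _ _ ha hb => EReal.add_ne_bot_iff.2 ⟨ha, hb⟩)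
    EReal.zero_ne_bot h

theorem EReal.sum_ne_top {ι : Type*} {s : Finset ι} {f : ι → EReal} (h : ∀ i ∈ s, f i ≠ ⊤) :
    ∑ i ∈ s, f i ≠ ⊤ :=
  Finset.sum_induction f (· ≠ ⊤) (fun _ _ => EReal.add_ne_top) EReal.zero_ne_top h

section HasDirDeriv

variable {Ω : Type*} [AddCommGroup Ω] [Module ℝ Ω] {h k : Ω → EReal} {x d : Ω} {L L' : EReal}

theorem HasDirDeriv.unique (hL : HasDirDeriv h x d L) (hL' : HasDirDeriv h x d L') : L = L' :=
  tendsto_nhds_unique hL hL'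

theorem HasDirDeriv.smul (hL : HasDirDeriv h x d L) {c : ℝ} (hc : 0 < c) :
    HasDirDeriv h x (c • d) (c * L) := by
  have hscale : Tendsto (c * ·) (𝓝[>] (0 : ℝ)) (𝓝[>] 0) :=
    tendsto_iff_comap.2 (comap_mulLeft_nhdsGT_zero hc).ge
  refine (EReal.Tendsto.const_mul (hL.comp hscale) (.inl (EReal.coe_ne_bot c))
    (.inl (EReal.coe_ne_top c))).congr' ?_
  filter_upwards [self_mem_nhdsWithin] with t (ht : 0 < t)
  simp only [Function.comp_apply, smul_smul, ← mul_assoc, ← EReal.coe_mul]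
  rw [mul_comm t c]
  congr 3
  field_simp

theorem hasDirDeriv_zero (hx : h x ≠ ⊥) (hx' : h x ≠ ⊤) : HasDirDeriv h x 0 0 := by
  lift h x to ℝ using ⟨hx', hx⟩ with a ha
  refine tendsto_const_nhds.congr fun t => ?_
  simp [← ha]

theorem HasDirDeriv.add (hL : HasDirDeriv h x d L) (hL' : HasDirDeriv k x d L')
    (hx : h x ≠ ⊥) (hx' : h x ≠ ⊤) (kx : k x ≠ ⊥) (kx' : k x ≠ ⊤) (hLb : L ≠ ⊥) (hLb' : L' ≠ ⊥) :
    HasDirDeriv (fun y => h y + k y) x d (L + L') := by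
  have hsum := (EReal.continuousAt_add (p := (L, L')) (.inr hLb') (.inl hLb)).tendsto.comp
    (hL.prodMk_nhds hL')
  refine hsum.congr' ?_
  filter_upwards [self_mem_nhdsWithin] with t (ht : 0 < t)
  lift h x to ℝ using ⟨hx', hx⟩ with a ha
  lift k x to ℝ using ⟨kx', kx⟩ with b hb
  rw [Function.comp_apply, ← EReal.left_distrib_of_nonneg_of_ne_top (by positivity)
    (EReal.coe_ne_top _)]
  congr 1
  rw [sub_eq_add_neg, sub_eq_add_neg, sub_eq_add_neg, ← EReal.coe_add, ← EReal.coe_neg,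
    ← EReal.coe_neg, ← EReal.coe_neg, neg_add, EReal.coe_add, add_add_add_comm]

theorem HasDirDeriv.sum {ι : Type*} {s : Finset ι} {h : ι → Ω → EReal} {L : ι → EReal}
    (hL : ∀ i ∈ s, HasDirDeriv (h i) x d (L i)) (hx : ∀ i ∈ s, h i x ≠ ⊥)
    (hx' : ∀ i ∈ s, h i x ≠ ⊤) (hLb : ∀ i ∈ s, L i ≠ ⊥) :
    HasDirDeriv (fun y => ∑ i ∈ s, h i y) x d (∑ i ∈ s, L i) := by
  classical
  induction s using Finset.induction_on with
  | empty => simp [HasDirDeriv]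
  | insert i s hi ih =>
    simp only [Finset.forall_mem_insert] at hL hx hx' hLb
    simp only [Finset.sum_insert hi]
    exact hL.1.add (ih hL.2 hx.2 hx'.2 hLb.2) hx.1 hx'.1 (EReal.sum_ne_bot hx.2)
      (EReal.sum_ne_top hx'.2) hLb.1 (EReal.sum_ne_bot hLb.2)

theorem hasDirDeriv_coe {r : Ω → ℝ} {ℓ : ℝ}
    (hr : HasDerivWithinAt (fun t : ℝ => r (x + t • d)) ℓ (Ioi 0) 0) :
    HasDirDeriv (fun y => (r y : EReal)) x d ℓ := by
  refine (EReal.tendsto_coe.2 ((hasDerivWithinAt_iff_tendsto_slope' (lt_irrefl 0)).1 hr)).congr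
    fun t => ?_
  simp [slope_def_field, div_eq_inv_mul]

end HasDirDeriv

theorem dirDeriv_add_of_mul_nonneg {φ : ℝ → EReal} {y : ℝ} {G : ℝ → EReal}
    (hG : ∀ s, HasDirDeriv φ y s (G s)) (hy : φ y ≠ ⊥) (hy' : φ y ≠ ⊤) {a b : ℝ}
    (hab : 0 ≤ a * b) : G (a + b) = G a + G b := by
  have hray : ∀ u s, 0 ≤ s → G (s * u) = s * G u := by
    intro u s hs
    rcases hs.eq_or_lt with rfl | hs
    · simpa using (hG 0).unique (hasDirDeriv_zero hy hy')
    · exact (hG (s * u)).unique ((hG u).smul hs)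
  have hcone : ∀ u s t, 0 ≤ s → 0 ≤ t → G ((s + t) * u) = G (s * u) + G (t * u) := by
    intro u s t hs ht
    rw [hray u _ (add_nonneg hs ht), hray u s hs, hray u t ht, EReal.coe_add,
      EReal.right_distrib_of_nonneg (EReal.coe_nonneg.2 hs) (EReal.coe_nonneg.2 ht)]
  rcases mul_nonneg_iff.1 hab with ⟨ha, hb⟩ | ⟨ha, hb⟩
  · simpa using hcone 1 a b ha hb
  · simpa [add_comm a b] using hcone (-1) (-a) (-b) (neg_nonneg.2 ha) (neg_nonneg.2 hb)

/-- The right derivative of `t ↦ |a + t * s|` at `0`. -/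
noncomputable def absDeriv (a s : ℝ) : ℝ :=
  if a = 0 then |s| else SignType.sign a * s

theorem hasDerivWithinAt_abs_add_mul (a s : ℝ) :
    HasDerivWithinAt (fun t => |a + t * s|) (absDeriv a s) (Ioi 0) 0 := by
  unfold absDeriv
  split_ifs with ha
  · subst ha
    refine ((hasDerivAt_id (0 : ℝ)).mul_const |s|).hasDerivWithinAt.congr
      (fun t (ht : 0 < t) => ?_) (by simp) |>.congr_deriv (one_mul _)
    simp [abs_mul, abs_of_pos ht]
  · have hlin : HasDerivAt (fun t : ℝ => a + t * s) s 0 := by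
      simpa using ((hasDerivAt_id (0 : ℝ)).mul_const s).const_add a
    exact ((hasDerivAt_abs (by simpa using ha)).comp 0 hlin).hasDerivWithinAt.congr_deriv
      (by simp)

theorem absDeriv_add_of_mul_nonneg (a : ℝ) {s t : ℝ} (hst : 0 ≤ s * t) :
    absDeriv a (s + t) = absDeriv a s + absDeriv a t := by
  unfold absDeriv
  split_ifs
  · exact (abs_add_eq_add_abs_iff s t).2 (mul_nonneg_iff.1 hst)
  · ring

section LayerCake

variable {ι : Type*}

/-- `a` and `b` are comonotone on `ι` extended by a point where both vanish. -/
def SignComonotone (a b : ι → ℝ) : Prop :=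
  (∀ i j, 0 ≤ (a i - a j) * (b i - b j)) ∧ ∀ i, 0 ≤ a i * b i

theorem SignComonotone.neg {a b : ι → ℝ} (h : SignComonotone a b) : SignComonotone (-a) (-b) :=
  ⟨fun i j => by simpa only [Pi.neg_apply, neg_sub_neg] using h.1 j i,
    fun i => by simpa only [Pi.neg_apply, neg_mul_neg] using h.2 i⟩

theorem signComonotone_sup_inf (d : ι → ℝ) : SignComonotone (d ⊔ 0) (d ⊓ 0) := by
  refine ⟨fun i j => ?_, fun i => ?_⟩
  · simp only [Pi.sup_apply, Pi.inf_apply, Pi.zero_apply]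
    rcases le_total (d i) (d j) with h | h
    · exact mul_nonneg_of_nonpos_of_nonpos (sub_nonpos.2 (max_le_max h le_rfl))
        (sub_nonpos.2 (min_le_min h le_rfl))
    · exact mul_nonneg (sub_nonneg.2 (max_le_max h le_rfl)) (sub_nonneg.2 (min_le_min h le_rfl))
  · simp only [Pi.sup_apply, Pi.inf_apply, Pi.zero_apply]
    rcases le_total (d i) 0 with h | h <;> simp [h]

theorem signComonotone_smul_indicator {S : Set ι} {c : ℝ} (hc : 0 ≤ c) {b : ι → ℝ} (hb : 0 ≤ b)
    (hbS : Function.support b ⊆ S) : SignComonotone (c • S.indicator 1) b := by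
  classical
  have hout : ∀ i ∉ S, b i = 0 := fun i hi => Function.notMem_support.1 fun h => hi (hbS h)
  refine ⟨fun i j => ?_, fun i => ?_⟩
  · by_cases hi : i ∈ S <;> by_cases hj : j ∈ S <;>
      simp [hi, hj, hout, mul_nonneg hc (hb i), mul_nonneg hc (hb j)]
  · by_cases hi : i ∈ S <;> simp [hi, mul_nonneg hc (hb i)]

variable [Finite ι] {D : (ι → ℝ) → EReal}

theorem exists_indicator_neg_of_nonneg (hsmul : ∀ c : ℝ, 0 < c → ∀ d, D (c • d) = c * D d)
    (hadd : ∀ a b, SignComonotone a b → D (a + b) = D a + D b) {d : ι → ℝ} (hd : 0 ≤ d)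
    (hD : D d < 0) : ∃ S : Set ι, D (S.indicator 1) < 0 := by
  induction hn : (Function.support d).ncard using Nat.strong_induction_on generalizing d with
  | _ n ih =>
  set S := Function.support d
  rcases S.eq_empty_or_nonempty with hS | hS
  · refine ⟨∅, ?_⟩
    rwa [Set.indicator_empty, ← Pi.zero_def, ← Function.support_eq_empty_iff.1 hS]
  obtain ⟨i₀, hi₀, hmin⟩ := S.exists_min_image d S.toFinite hS
  set m := d i₀
  have hm : 0 < m := (hd i₀).lt_of_ne' hi₀
  set d' := d - m • S.indicator 1
  have hd' : 0 ≤ d' := fun i => by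
    by_cases hi : i ∈ S
    · simpa [d', hi] using hmin i hi
    · simp [d', hi, Function.notMem_support.1 hi]
  have hd'S : Function.support d' ⊂ S := by
    refine (Set.ssubset_iff_of_subset fun i hi => ?_).2 ⟨i₀, hi₀, by simp [d', hi₀, m]⟩
    by_contra hiS
    exact hi (by simp [d', hiS, Function.notMem_support.1 hiS])
  have hsplit : D d = m * D (S.indicator 1) + D d' := by
    rw [← hsmul m hm, ← hadd _ _ (signComonotone_smul_indicator hm.le hd' hd'S.subset),
      add_sub_cancel]
  by_cases hSneg : D (S.indicator 1) < 0
  · exact ⟨S, hSneg⟩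
  refine ih _ (hn ▸ Set.ncard_lt_ncard hd'S) hd' ?_ rfl
  by_contra hd'neg
  exact hD.not_ge (hsplit ▸ add_nonneg (EReal.mul_nonneg (EReal.coe_nonneg.2 hm.le)
    (not_lt.1 hSneg)) (not_lt.1 hd'neg))

theorem exists_ternary_neg (hsmul : ∀ c : ℝ, 0 < c → ∀ d, D (c • d) = c * D d)
    (hadd : ∀ a b, SignComonotone a b → D (a + b) = D a + D b) {d : ι → ℝ} (hD : D d < 0) :
    ∃ t : ι → ℝ, (∀ i, t i = -1 ∨ t i = 0 ∨ t i = 1) ∧ D t < 0 := by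
  classical
  have hsplit : D d = D (d ⊔ 0) + D (d ⊓ 0) := by
    rw [← hadd _ _ (signComonotone_sup_inf d), add_comm, inf_add_sup, add_zero]
  by_cases hpos : D (d ⊔ 0) < 0
  · obtain ⟨S, hS⟩ := exists_indicator_neg_of_nonneg hsmul hadd le_sup_right hpos
    exact ⟨S.indicator 1, fun i => by by_cases hi : i ∈ S <;> simp [hi], hS⟩
  have hneg : D (d ⊓ 0) < 0 := by
    by_contra h
    exact hD.not_ge (hsplit ▸ add_nonneg (not_lt.1 hpos) (not_lt.1 h))
  obtain ⟨S, hS⟩ := exists_indicator_neg_of_nonneg (D := fun d => D (-d))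
    (fun c hc d => by simpa only [smul_neg] using hsmul c hc (-d))
    (fun a b h => by simpa only [neg_add] using hadd _ _ h.neg)
    (neg_nonneg.2 inf_le_right) (by simpa only [neg_neg] using hneg)
  exact ⟨-S.indicator 1, fun i => by by_cases hi : i ∈ S <;> simp [hi], hS⟩

end LayerCake

section Objective

variable {ι : Type*} [Fintype ι]

noncomputable def objDeriv (E : Finset (ι × ι)) (w : ι × ι → ℝ) (f : (ι → ℝ) → ℝ)
    (gd : ι → ℝ → ℝ → EReal) (x d : ι → ℝ) : EReal :=
  ((fderiv ℝ f x d : ℝ) : EReal) + ∑ v, gd v (x v) (d v) +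
    ((∑ e ∈ E, w e * absDeriv (x e.1 - x e.2) (d e.1 - d e.2) : ℝ) : EReal)

variable {E : Finset (ι × ι)} {w : ι × ι → ℝ} {f : (ι → ℝ) → ℝ} {g : ι → ℝ → EReal}
  {gd : ι → ℝ → ℝ → EReal} {x : ι → ℝ}

theorem hasDirDeriv_objF {d : ι → ℝ}
    (hf : DifferentiableAt ℝ f x) (hgx : ∀ v, g v (x v) ≠ ⊥) (hgx' : ∀ v, g v (x v) ≠ ⊤)
    (hg : ∀ v, HasDirDeriv (g v) (x v) (d v) (gd v (x v) (d v)))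
    (hgd : ∀ v, gd v (x v) (d v) ≠ ⊥) :
    HasDirDeriv (objF E w f g) x d (objDeriv E w f gd x d) := by
  have hline : HasDerivAt (fun t : ℝ => x + t • d) d 0 := by
    simpa using ((hasDerivAt_id (0 : ℝ)).smul_const d).const_add x
  have hF : HasDirDeriv (fun y => (f y : EReal)) x d (fderiv ℝ f x d) :=
    hasDirDeriv_coe (hf.hasFDerivAt.comp_hasDerivAt_of_eq 0 hline (by simp)).hasDerivWithinAt
  have hG : HasDirDeriv (fun y => ∑ v, g v (y v)) x d (∑ v, gd v (x v) (d v)) :=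
    HasDirDeriv.sum (fun v _ => hg v) (fun v _ => hgx v) (fun v _ => hgx' v) (fun v _ => hgd v)
  have hT : HasDirDeriv (fun y => ((∑ e ∈ E, w e * |y e.1 - y e.2| : ℝ) : EReal)) x d
      ((∑ e ∈ E, w e * absDeriv (x e.1 - x e.2) (d e.1 - d e.2) : ℝ) : EReal) := by
    refine hasDirDeriv_coe (HasDerivWithinAt.fun_sum fun e _ => ?_)
    refine ((hasDerivWithinAt_abs_add_mul (x e.1 - x e.2) (d e.1 - d e.2)).const_mul
      (w e)).congr (fun t _ => ?_) ?_ <;>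
      simp only [Pi.add_apply, Pi.smul_apply, smul_eq_mul] <;> ring_nf
  have hFG := hF.add hG (EReal.coe_ne_bot _) (EReal.coe_ne_top _)
    (EReal.sum_ne_bot fun v _ => hgx v) (EReal.sum_ne_top fun v _ => hgx' v) (EReal.coe_ne_bot _)
    (EReal.sum_ne_bot fun v _ => hgd v)
  exact hFG.add hT
    (EReal.add_ne_bot_iff.2 ⟨EReal.coe_ne_bot _, EReal.sum_ne_bot fun v _ => hgx v⟩)
    (EReal.add_ne_top (EReal.coe_ne_top _) (EReal.sum_ne_top fun v _ => hgx' v))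
    (EReal.coe_ne_bot _) (EReal.coe_ne_top _)
    (EReal.add_ne_bot_iff.2 ⟨EReal.coe_ne_bot _, EReal.sum_ne_bot fun v _ => hgd v⟩)
    (EReal.coe_ne_bot _)

theorem objDeriv_add {a b : ι → ℝ} (hab : SignComonotone a b)
    (hgd : ∀ v s t, 0 ≤ s * t → gd v (x v) (s + t) = gd v (x v) s + gd v (x v) t) :
    objDeriv E w f gd x (a + b) = objDeriv E w f gd x a + objDeriv E w f gd x b := by
  have hG : ∑ v, gd v (x v) ((a + b) v) = ∑ v, gd v (x v) (a v) + ∑ v, gd v (x v) (b v) := by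
    rw [← Finset.sum_add_distrib]
    exact Finset.sum_congr rfl fun v _ => hgd v _ _ (hab.2 v)
  have hT : ∑ e ∈ E, w e * absDeriv (x e.1 - x e.2) ((a + b) e.1 - (a + b) e.2) =
      ∑ e ∈ E, w e * absDeriv (x e.1 - x e.2) (a e.1 - a e.2) +
        ∑ e ∈ E, w e * absDeriv (x e.1 - x e.2) (b e.1 - b e.2) := by
    rw [← Finset.sum_add_distrib]
    refine Finset.sum_congr rfl fun e _ => ?_
    rw [← mul_add, ← absDeriv_add_of_mul_nonneg _ (hab.1 e.1 e.2), Pi.add_apply, Pi.add_apply,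
      add_sub_add_comm]
  simp only [objDeriv, map_add, hG, hT, EReal.coe_add]
  ac_rfl

theorem ne_top_of_objF_ne_top (hgx : ∀ v, g v (x v) ≠ ⊥) (hx : objF E w f g x ≠ ⊤) (v : ι) :
    g v (x v) ≠ ⊤ := by
  classical
  intro hv
  apply hx
  rw [objF, ← Finset.add_sum_erase _ _ (Finset.mem_univ v), hv,
    EReal.top_add_of_ne_bot (EReal.sum_ne_bot fun u _ => hgx u), EReal.coe_add_top,
    EReal.top_add_coe]

end Objective

theorem stmt_13_general (E : Finset (V × V)) (w : V × V → ℝ)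
    (f : (V → ℝ) → ℝ) (hf : Differentiable ℝ f)
    (g : V → ℝ → EReal) (hgbot : ∀ v y, g v y ≠ ⊥)
    (gd : V → ℝ → ℝ → EReal)
    (hgd : ∀ v y, g v y ≠ ⊤ → ∀ dir : ℝ,
      HasDirDeriv (g v) y dir (gd v y dir) ∧ gd v y dir ≠ ⊥)
    (x : V → ℝ) (hx : objF E w f g x ≠ ⊤)
    (hdesc : ∃ d : V → ℝ, ∃ L : EReal,
      HasDirDeriv (objF E w f g) x d L ∧ L < 0) :
    ∃ d : V → ℝ, (∀ v, d v = -1 ∨ d v = 0 ∨ d v = 1) ∧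
      ∃ L : EReal, HasDirDeriv (objF E w f g) x d L ∧ L < 0 := by
  have hgx : ∀ v, g v (x v) ≠ ⊤ := ne_top_of_objF_ne_top (fun v => hgbot v _) hx
  have hD : ∀ d, HasDirDeriv (objF E w f g) x d (objDeriv E w f gd x d) := fun d =>
    hasDirDeriv_objF (hf x) (fun v => hgbot v _) hgx (fun v => (hgd v _ (hgx v) _).1)
      (fun v => (hgd v _ (hgx v) _).2)
  have hsmul : ∀ c : ℝ, 0 < c → ∀ d, objDeriv E w f gd x (c • d) = c * objDeriv E w f gd x d :=
    fun c hc d => (hD (c • d)).unique ((hD d).smul hc)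
  have hadd : ∀ a b, SignComonotone a b →
      objDeriv E w f gd x (a + b) = objDeriv E w f gd x a + objDeriv E w f gd x b :=
    fun a b hab => objDeriv_add hab fun v _ _ =>
      dirDeriv_add_of_mul_nonneg (fun s => (hgd v _ (hgx v) s).1) (hgbot v _) (hgx v)
  obtain ⟨d, L, hL, hLneg⟩ := hdesc
  obtain ⟨t, ht, htneg⟩ := exists_ternary_neg hsmul hadd (hL.unique (hD d) ▸ hLneg)
  exact ⟨t, ht, _, hD t, htneg⟩

theorem stmt_13 (E : Finset (V × V)) (w : V × V → ℝ) (hw : ∀ e ∈ E, 0 ≤ w e)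
    (f : (V → ℝ) → ℝ) (hf : Differentiable ℝ f)
    (g : V → ℝ → EReal) (hgbot : ∀ v y, g v y ≠ ⊥)
    (gd : V → ℝ → ℝ → EReal)
    (hgd : ∀ v y, g v y ≠ ⊤ → ∀ dir : ℝ,
      HasDirDeriv (g v) y dir (gd v y dir) ∧ gd v y dir ≠ ⊥)
    (x : V → ℝ) (hx : objF E w f g x ≠ ⊤)
    (hdesc : ∃ d : V → ℝ, ∃ L : EReal,
      HasDirDeriv (objF E w f g) x d L ∧ L < 0) :
    ∃ d : V → ℝ, (∀ v, d v = -1 ∨ d v = 0 ∨ d v = 1) ∧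
      ∃ L : EReal, HasDirDeriv (objF E w f g) x d L ∧ L < 0 :=
  stmt_13_general E w f hf g hgbot gd hgd x hx hdesc
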